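/- (Volume-average dynamics under radial diffusion.) Let R > 0, D > 0, T > 0. Let c : [0, T] × [0, R] → ℝ and j : [0, T] → ℝ be such that: (i) for each t, r ↦ c(t, r) is differentiable on (0, R] and the function g(t, r) := r²·∂c/∂r(t, r) extends continuously to [0, R] with g(t, 0) = 0; (ii) ∂c/∂t exists and is continuous on [0, T] × [0, R]; (iii) the radial diffusion equation ∂c/∂t(t, r) = (D/r²)·∂/∂r(r²·∂c/∂r(t, r)) holds for all (t, r) with 0 < r ≤ R; and (iv) the surface flux condition −D·∂c/∂r(t, R) = j(t) holds for all t. Then the volume average c̄(t) := (3/R³)·∫₀^R c(t, r)·r² dr is differentiable on [0, T] with c̄'(t) = −(3/R)·j(t). -/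

import Mathlib

/-!
Differentiating under the integral sign, `c̄' = (3/R³) ∫₀^R ∂ₜc · r² dr`; this is justified on the
closed time interval by writing `c(s, r) = c(0, r) + ∫₀^s ∂ₜc(u, r) du` and exchanging the order of
integration, which is legitimate because `∂ₜc` is continuous on the compact rectangle. The
diffusion equation says `r² ∂ₜc = D ∂ᵣ(r² ∂ᵣc)`, so the remaining integral is
`D [r² ∂ᵣc]₀^R = D R² ∂ᵣc(R) = -R² j`. The only delicate point is the integrability of `c(t, ·) r²`
near the centre: the bound `|r² ∂ᵣc| ≤ C` yields `|c(t, r)| ≤ |c(t, R)| + C / r`.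
-/

open MeasureTheory Set Function

section Parametric

variable {E : Type*} [NormedAddCommGroup E] [NormedSpace ℝ E] {a b c d : ℝ}

theorem continuousOn_intervalIntegral_of_continuousOn_uncurry {f : ℝ → ℝ → E} (hcd : c ≤ d)
    (hf : ContinuousOn (uncurry f) (Icc a b ×ˢ Icc c d)) :
    ContinuousOn (fun t => ∫ x in c..d, f t x) (Icc a b) := by
  rcases (Icc a b).eq_empty_or_nonempty with hempty | hne
  · simp [hempty]
  have hab : a ≤ b := nonempty_Icc.mp hne
  -- Extending `f` constantly off the rectangle makes it globally continuous.
  set f' : ℝ → ℝ → E := fun t x => f (projIcc a b hab t) (projIcc c d hcd x)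
  have hf' : Continuous (uncurry f') :=
    hf.comp_continuous
      (f := fun p : ℝ × ℝ => ((projIcc a b hab p.1 : ℝ), (projIcc c d hcd p.2 : ℝ))) (by fun_prop)
      fun p => ⟨(projIcc a b hab p.1).2, (projIcc c d hcd p.2).2⟩
  refine (intervalIntegral.continuous_parametric_intervalIntegral_of_continuous' hf' c d)
    |>.continuousOn.congr fun t ht => intervalIntegral.integral_congr fun x hx => ?_
  rw [uIcc_of_le hcd] at hx
  simp [f', projIcc_of_mem hab ht, projIcc_of_mem hcd hx]

theorem intervalIntegral_swap_of_continuousOn {f : ℝ → ℝ → E} (hab : a ≤ b) (hcd : c ≤ d)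
    (hf : ContinuousOn (uncurry f) (Icc a b ×ˢ Icc c d)) :
    ∫ x in a..b, ∫ y in c..d, f x y = ∫ y in c..d, ∫ x in a..b, f x y := by
  have hint : Integrable (uncurry f)
      ((volume.restrict (Ioc a b)).prod (volume.restrict (Ioc c d))) := by
    rw [Measure.prod_restrict, ← Measure.volume_eq_prod]
    exact (hf.integrableOn_compact (isCompact_Icc.prod isCompact_Icc)).mono_set
      (prod_mono Ioc_subset_Icc_self Ioc_subset_Icc_self)
  simp only [intervalIntegral.integral_of_le hab, intervalIntegral.integral_of_le hcd]
  exact integral_integral_swap hint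

variable [CompleteSpace E]

theorem intervalIntegral_eq_sub_of_hasDerivWithinAt_Icc {f f' : ℝ → E} (hab : a ≤ b)
    (hf : ∀ t ∈ Icc a b, HasDerivWithinAt f (f' t) (Icc a b) t)
    (hf' : ContinuousOn f' (Icc a b)) :
    ∫ t in a..b, f' t = f b - f a :=
  intervalIntegral.integral_eq_sub_of_hasDerivAt_of_le hab
    (fun t ht => (hf t ht).continuousWithinAt)
    (fun t ht => (hf t (Ioo_subset_Icc_self ht)).hasDerivAt (Icc_mem_nhds ht.1 ht.2))
    (hf'.intervalIntegrable_of_Icc hab)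

theorem ContinuousOn.hasDerivWithinAt_intervalIntegral_Icc {g : ℝ → E}
    (hg : ContinuousOn g (Icc a b)) {t : ℝ} (ht : t ∈ Icc a b) :
    HasDerivWithinAt (fun s => ∫ u in a..s, g u) (g t) (Icc a b) t := by
  have : Fact (t ∈ Icc a b) := ⟨ht⟩
  exact intervalIntegral.integral_hasDerivWithinAt_right
    ((hg.mono (Icc_subset_Icc le_rfl ht.2)).intervalIntegrable_of_Icc ht.1)
    (hg.stronglyMeasurableAtFilter_nhdsWithin measurableSet_Icc t) (hg t ht)

theorem hasDerivWithinAt_intervalIntegral_of_continuousOn_deriv {F F' : ℝ → ℝ → E}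
    (hcd : c ≤ d)
    (hF : ∀ t ∈ Icc a b, ∀ x ∈ Icc c d, HasDerivWithinAt (F · x) (F' t x) (Icc a b) t)
    (hF' : ContinuousOn (uncurry F') (Icc a b ×ˢ Icc c d))
    (hFint : ∀ t ∈ Icc a b, IntervalIntegrable (F t) volume c d) {t : ℝ} (ht : t ∈ Icc a b) :
    HasDerivWithinAt (fun s => ∫ x in c..d, F s x) (∫ x in c..d, F' t x) (Icc a b) t := by
  have ha : a ∈ Icc a b := ⟨le_rfl, ht.1.trans ht.2⟩
  have hF'_sub : ∀ s ∈ Icc a b, ContinuousOn (uncurry F') (Icc a s ×ˢ Icc c d) := fun s hs =>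
    hF'.mono (prod_mono (Icc_subset_Icc le_rfl hs.2) subset_rfl)
  have hFTC : ∀ s ∈ Icc a b, ∀ x ∈ Icc c d, F s x = F a x + ∫ u in a..s, F' u x := by
    intro s hs x hx
    rw [intervalIntegral_eq_sub_of_hasDerivWithinAt_Icc hs.1
      (fun u hu => (hF u ⟨hu.1, hu.2.trans hs.2⟩ x hx).mono (Icc_subset_Icc le_rfl hs.2))
      ((hF'_sub s hs).comp (continuous_id.prodMk continuous_const).continuousOn
        fun u hu => ⟨hu, hx⟩), add_sub_cancel]
  have hrep : ∀ s ∈ Icc a b, ∫ x in c..d, F s x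
      = (∫ x in c..d, F a x) + ∫ u in a..s, ∫ x in c..d, F' u x := by
    intro s hs
    have hslice : ContinuousOn (fun x => ∫ u in a..s, F' u x) (Icc c d) :=
      continuousOn_intervalIntegral_of_continuousOn_uncurry (f := fun x u => F' u x) hs.1
        ((hF'_sub s hs).comp continuous_swap.continuousOn fun p hp => ⟨hp.2, hp.1⟩)
    rw [intervalIntegral_swap_of_continuousOn hs.1 hcd (hF'_sub s hs),
      ← intervalIntegral.integral_add (hFint a ha) (hslice.intervalIntegrable_of_Icc hcd)]
    exact intervalIntegral.integral_congr fun x hx => hFTC s hs x (uIcc_of_le hcd ▸ hx)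
  have hG := continuousOn_intervalIntegral_of_continuousOn_uncurry hcd hF'
  exact (hG.hasDerivWithinAt_intervalIntegral_Icc ht |>.const_add _).congr hrep (hrep t ht)

end Parametric

section SingularRadial

variable {f f' : ℝ → ℝ} {R C : ℝ}

theorem abs_sub_le_div_of_abs_sq_mul_deriv_le (hR : 0 < R)
    (hf : ∀ r ∈ Ioc 0 R, HasDerivAt f (f' r) r) (hC : ∀ r ∈ Ioc 0 R, |r ^ 2 * f' r| ≤ C) :
    ∀ r ∈ Ioc 0 R, |f r - f R| ≤ C / r := by
  intro r hr
  have hC0 : 0 ≤ C := (abs_nonneg _).trans (hC r hr)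
  have hbarrier : ∀ x ∈ Ioc (0 : ℝ) R, HasDerivAt (fun y => C / y) (-(C / x ^ 2)) x :=
    fun x hx => ((hasDerivAt_const x C).div (hasDerivAt_id' x) hx.1.ne').congr_deriv (by ring)
  have hderiv_bound : ∀ x ∈ Ioc (0 : ℝ) R, |f' x| ≤ C / x ^ 2 := fun x hx => by
    rw [le_div_iff₀ (pow_pos hx.1 2), mul_comm, ← abs_of_pos (pow_pos hx.1 2), ← abs_mul]
    exact hC x hx
  have hcont : ContinuousOn f (Ioc 0 R) := fun x hx => (hf x hx).continuousAt.continuousWithinAt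
  have hcont_barrier : ContinuousOn (fun y => C / y) (Ioc 0 R) :=
    fun x hx => (hbarrier x hx).continuousAt.continuousWithinAt
  have hlower : MonotoneOn (fun x => f x - C / x) (Ioc 0 R) :=
    monotoneOn_of_hasDerivWithinAt_nonneg (convex_Ioc 0 R) (hcont.sub hcont_barrier)
      (fun x hx => by
        rw [interior_Ioc] at hx ⊢
        exact ((hf x (Ioo_subset_Ioc_self hx)).sub
          (hbarrier x (Ioo_subset_Ioc_self hx))).hasDerivWithinAt)
      fun x hx => by
        rw [interior_Ioc] at hx
        linarith [(abs_le.mp (hderiv_bound x (Ioo_subset_Ioc_self hx))).1]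
  have hupper : AntitoneOn (fun x => f x + C / x) (Ioc 0 R) :=
    antitoneOn_of_hasDerivWithinAt_nonpos (convex_Ioc 0 R) (hcont.add hcont_barrier)
      (fun x hx => by
        rw [interior_Ioc] at hx ⊢
        exact ((hf x (Ioo_subset_Ioc_self hx)).add
          (hbarrier x (Ioo_subset_Ioc_self hx))).hasDerivWithinAt)
      fun x hx => by
        rw [interior_Ioc] at hx
        linarith [(abs_le.mp (hderiv_bound x (Ioo_subset_Ioc_self hx))).2]
  have hRmem : R ∈ Ioc 0 R := ⟨hR, le_rfl⟩
  have hlowerR := hlower hr hRmem hr.2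
  have hupperR := hupper hr hRmem hr.2
  have hCR : 0 ≤ C / R := div_nonneg hC0 hR.le
  simp only at hlowerR hupperR
  rw [abs_sub_le_iff]
  constructor <;> linarith

theorem intervalIntegrable_mul_sq_of_abs_sq_mul_deriv_le (hR : 0 < R)
    (hf : ∀ r ∈ Ioc 0 R, HasDerivAt f (f' r) r) (hC : ∀ r ∈ Ioc 0 R, |r ^ 2 * f' r| ≤ C) :
    IntervalIntegrable (fun r => f r * r ^ 2) volume 0 R := by
  rw [intervalIntegrable_iff_integrableOn_Ioc_of_le hR.le]
  have hcont : ContinuousOn (fun r => f r * r ^ 2) (Ioc 0 R) :=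
    fun x hx => ((hf x hx).continuousAt.mul (continuousAt_pow x 2)).continuousWithinAt
  refine IntegrableOn.of_bound measure_Ioc_lt_top (hcont.aestronglyMeasurable measurableSet_Ioc)
    (|f R| * R ^ 2 + C * R) ?_
  filter_upwards [ae_restrict_mem measurableSet_Ioc] with r hr
  have hC0 : 0 ≤ C := (abs_nonneg _).trans (hC r hr)
  have hdiff := abs_sub_le_div_of_abs_sq_mul_deriv_le hR hf hC r hr
  have hfr : |f r| ≤ |f R| + C / r := by
    linarith [abs_sub_abs_le_abs_sub (f r) (f R)]
  rw [Real.norm_eq_abs, abs_mul, abs_of_nonneg (sq_nonneg r)]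
  calc |f r| * r ^ 2 ≤ (|f R| + C / r) * r ^ 2 := by gcongr
    _ = |f R| * r ^ 2 + C * r := by rw [add_mul, div_mul_eq_mul_div, sq, ← mul_assoc C,
      mul_div_cancel_right₀ _ hr.1.ne']
    _ ≤ |f R| * R ^ 2 + C * R := by gcongr; exacts [hr.1.le, hr.2, hr.2]

end SingularRadial

theorem volume_average_dynamics_general
    (R D T : ℝ) (hR : 0 < R) (hD : 0 < D)
    (c cr ct g : ℝ → ℝ → ℝ) (j : ℝ → ℝ)
    (hcr : ∀ t ∈ Set.Icc (0 : ℝ) T, ∀ r ∈ Set.Ioc (0 : ℝ) R,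
      HasDerivAt (c t) (cr t r) r)
    (hg_eq : ∀ t ∈ Set.Icc (0 : ℝ) T, ∀ r ∈ Set.Ioc (0 : ℝ) R,
      g t r = r ^ 2 * cr t r)
    (hg0 : ∀ t ∈ Set.Icc (0 : ℝ) T, g t 0 = 0)
    (hgcont : ∀ t ∈ Set.Icc (0 : ℝ) T, ContinuousOn (g t) (Set.Icc (0 : ℝ) R))
    (hct : ∀ t ∈ Set.Icc (0 : ℝ) T, ∀ r ∈ Set.Icc (0 : ℝ) R,
      HasDerivWithinAt (fun s => c s r) (ct t r) (Set.Icc (0 : ℝ) T) t)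
    (hctcont : ContinuousOn (fun p : ℝ × ℝ => ct p.1 p.2)
      (Set.Icc (0 : ℝ) T ×ˢ Set.Icc (0 : ℝ) R))
    (hpde : ∀ t ∈ Set.Icc (0 : ℝ) T, ∀ r ∈ Set.Ioc (0 : ℝ) R,
      HasDerivAt (g t) (r ^ 2 * ct t r / D) r)
    (hflux : ∀ t ∈ Set.Icc (0 : ℝ) T, -D * cr t R = j t) :
    ∀ t ∈ Set.Icc (0 : ℝ) T,
      HasDerivWithinAt (fun s => (3 / R ^ 3) * ∫ r in (0 : ℝ)..R, c s r * r ^ 2)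
        (-(3 / R) * j t) (Set.Icc (0 : ℝ) T) t := by
  intro t ht
  have hR_mem : R ∈ Ioc 0 R := ⟨hR, le_rfl⟩
  have hint : ∀ s ∈ Icc 0 T, IntervalIntegrable (fun r => c s r * r ^ 2) volume 0 R := by
    intro s hs
    obtain ⟨C, hC⟩ := isCompact_Icc.exists_bound_of_continuousOn (hgcont s hs)
    refine intervalIntegrable_mul_sq_of_abs_sq_mul_deriv_le (C := C) hR (hcr s hs) fun r hr => ?_
    simpa only [hg_eq s hs r hr, Real.norm_eq_abs] using hC r (Ioc_subset_Icc_self hr)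
  have hdiff := hasDerivWithinAt_intervalIntegral_of_continuousOn_deriv hR.le
    (fun s hs r hr => (hct s hs r hr).mul_const (r ^ 2))
    (hctcont.mul (continuous_snd.pow 2).continuousOn) hint ht
  have hsurface : ∫ r in (0 : ℝ)..R, ct t r * r ^ 2 = -R ^ 2 * j t := by
    have hct_slice : ContinuousOn (ct t) (Icc 0 R) :=
      hctcont.comp (continuous_const.prodMk continuous_id).continuousOn fun r hr => ⟨ht, hr⟩
    have hFTC := intervalIntegral.integral_eq_sub_of_hasDerivAt_of_le hR.le (hgcont t ht)
      (fun r hr => hpde t ht r (Ioo_subset_Ioc_self hr))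
      ((((continuous_pow 2).continuousOn.mul hct_slice).div_const D).intervalIntegrable_of_Icc
        hR.le)
    calc ∫ r in (0 : ℝ)..R, ct t r * r ^ 2 = D * ∫ r in (0 : ℝ)..R, r ^ 2 * ct t r / D := by
          rw [← intervalIntegral.integral_const_mul]
          congr 1 with r
          field_simp
      _ = -R ^ 2 * j t := by
          rw [hFTC, hg0 t ht, hg_eq t ht R hR_mem, ← hflux t ht]
          ring
  exact (hdiff.const_mul (3 / R ^ 3)).congr_deriv (by rw [hsurface]; field_simp)

/-- Volume-average dynamics under radial diffusion: if `c(t,r)`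
satisfies the radial diffusion equation
`∂c/∂t = (D/r²)·∂/∂r(r²·∂c/∂r)` for `0 < r ≤ R` (encoded via the radial
derivative `cr`, the time derivative `ct`, and the extended flux function
`g(t,r) = r²·∂c/∂r` with `g(t,0) = 0` continuous on `[0,R]`), together with
the surface flux condition `−D·∂c/∂r(t,R) = j(t)`, then the volume average
`c̄(t) = (3/R³)∫₀^R c(t,r) r² dr` is differentiable on `[0,T]` with
`c̄'(t) = −(3/R)·j(t)`. -/
theorem volume_average_dynamics
    (R D T : ℝ) (hR : 0 < R) (hD : 0 < D) (hT : 0 < T)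
    (c cr ct g : ℝ → ℝ → ℝ) (j : ℝ → ℝ)
    (hcr : ∀ t ∈ Set.Icc (0 : ℝ) T, ∀ r ∈ Set.Ioc (0 : ℝ) R,
      HasDerivAt (c t) (cr t r) r)
    (hg_eq : ∀ t ∈ Set.Icc (0 : ℝ) T, ∀ r ∈ Set.Ioc (0 : ℝ) R,
      g t r = r ^ 2 * cr t r)
    (hg0 : ∀ t ∈ Set.Icc (0 : ℝ) T, g t 0 = 0)
    (hgcont : ∀ t ∈ Set.Icc (0 : ℝ) T, ContinuousOn (g t) (Set.Icc (0 : ℝ) R))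
    (hct : ∀ t ∈ Set.Icc (0 : ℝ) T, ∀ r ∈ Set.Icc (0 : ℝ) R,
      HasDerivWithinAt (fun s => c s r) (ct t r) (Set.Icc (0 : ℝ) T) t)
    (hctcont : ContinuousOn (fun p : ℝ × ℝ => ct p.1 p.2)
      (Set.Icc (0 : ℝ) T ×ˢ Set.Icc (0 : ℝ) R))
    (hpde : ∀ t ∈ Set.Icc (0 : ℝ) T, ∀ r ∈ Set.Ioc (0 : ℝ) R,
      HasDerivAt (g t) (r ^ 2 * ct t r / D) r)
    (hflux : ∀ t ∈ Set.Icc (0 : ℝ) T, -D * cr t R = j t) :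
    ∀ t ∈ Set.Icc (0 : ℝ) T,
      HasDerivWithinAt (fun s => (3 / R ^ 3) * ∫ r in (0 : ℝ)..R, c s r * r ^ 2)
        (-(3 / R) * j t) (Set.Icc (0 : ℝ) T) t :=
  volume_average_dynamics_general R D T hR hD c cr ct g j hcr hg_eq hg0 hgcont hct hctcont hpde
    hflux
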